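/- arXiv:0808.2990 — 2 statements merged into one kernel-verified Lean document; each statement's English description precedes it below -/
import Mathlib

section
/- Let V and W be finite-dimensional ℚ-vector spaces, G ≤ GL(V ⊕ W) a subgroup such that every element of G has the block form [[I, 0], [f, S]] with S ∈ GL(W), f ∈ Hom(V, W), and suppose the projection G → GL(W), g ↦ S, admits a group-theoretic section σ : im(proj) → G with σ(S) = [[I,0],[0,S]]. If u ∈ V is a vector such that g₁·u ≠ u for some g₁ ∈ G, then there exists g ∈ G with block form [[I,0],[f,I]] (i.e., S-component equal to I) such that g·u ≠ u. -/
/-- If every element of G ≤ GL(V ⊕ W) has block form [[I,0],[f,S]], the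
projection to the S-component admits a section (so the diagonal element [[I,0],[0,S]]
lies in G whenever some [[I,0],[f,S]] does), and u ∈ V satisfies g₁·u ≠ u for some
g₁ ∈ G, then there exists g ∈ G of the form [[I,0],[f,I]] with g·u ≠ u. -/
theorem stmt1 (V W : Type) [AddCommGroup V] [Module ℚ V] [AddCommGroup W] [Module ℚ W]
    [FiniteDimensional ℚ V] [FiniteDimensional ℚ W]
    (G : Subgroup ((V × W) ≃ₗ[ℚ] (V × W)))
    (hblock : ∀ g ∈ G, ∃ (f : V →ₗ[ℚ] W) (S : W ≃ₗ[ℚ] W),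
      ∀ v w, g (v, w) = (v, f v + S w))
    (hsec : ∀ g ∈ G, ∀ (f : V →ₗ[ℚ] W) (S : W ≃ₗ[ℚ] W),
      (∀ v w, g (v, w) = (v, f v + S w)) →
      (LinearEquiv.refl ℚ V).prodCongr S ∈ G)
    (u : V) (g₁ : (V × W) ≃ₗ[ℚ] (V × W)) (hg₁ : g₁ ∈ G)
    (hne : g₁ (u, 0) ≠ ((u, 0) : V × W)) :
    ∃ g ∈ G, (∃ f : V →ₗ[ℚ] W, ∀ v w, g (v, w) = (v, f v + w)) ∧
      g (u, 0) ≠ ((u, 0) : V × W) := by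
  obtain ⟨f, S, hfS⟩ := hblock g₁ hg₁
  have hdG : (LinearEquiv.refl ℚ V).prodCongr S ∈ G := hsec g₁ hg₁ f S hfS
  set d := (LinearEquiv.refl ℚ V).prodCongr S with hd
  refine ⟨d⁻¹ * g₁, mul_mem (inv_mem hdG) hg₁, ?_, ?_⟩
  · refine ⟨S.symm.toLinearMap.comp f, fun v w => ?_⟩
    have : (d⁻¹ * g₁) (v, w) = d.symm (g₁ (v, w)) := rfl
    rw [this, hfS]
    rw [show d.symm = (LinearEquiv.refl ℚ V).prodCongr S.symm from by rw [hd, LinearEquiv.prodCongr_symm]; rfl]; simp [LinearEquiv.prodCongr_apply, map_add]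
  · have hfu : f u ≠ 0 := by
      intro h
      apply hne
      rw [hfS u 0, h]
      simp
    have : (d⁻¹ * g₁) (u, 0) = (u, S.symm (f u)) := by
      have : (d⁻¹ * g₁) (u, 0) = d.symm (g₁ (u, 0)) := rfl
      rw [this, hfS]
      rw [show d.symm = (LinearEquiv.refl ℚ V).prodCongr S.symm from by rw [hd, LinearEquiv.prodCongr_symm]; rfl]; simp [LinearEquiv.prodCongr_apply]
    rw [this]
    intro h
    have := congrArg Prod.snd h
    simp at this
    exact hfu (by simpa using congrArg S this)
end

section
/- Let H be a finite-dimensional ℚ-vector space with a direct sum decomposition H = V₁ ⊕ V₂ ⊕ V₃, and let G be a group acting linearly on H such that every g ∈ G acts as the identity on V₁ and V₂ modulo V₃, i.e., g has block form [[I,0,0],[0,I,0],[0,f_g,S_g]] with f_g ∈ Hom(V₂,V₃) and S_g ∈ GL(V₃). Suppose that for every nonzero u ∈ V₂ there exists g ∈ G with f_g(u) ≠ 0 and S_g = I. Let τ ∈ H^{⊗n} be a G-invariant tensor (under the diagonal action), and suppose τ lies in the subspace spanned by tensors V_{j₁} ⊗ ⋯ ⊗ V_{jₙ} with all jᵢ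 ∈ {1,2}. Then τ ∈ V₁^{⊗n}. -/
open scoped TensorProduct
open PiTensorProduct

/-- projection of H = V₁ × V₂ × V₃ onto its m-th factor (m = 0,1,2), as an endomorphism. -/
noncomputable def factorProj (V₁ V₂ V₃ : Type) [AddCommGroup V₁] [Module ℚ V₁]
    [AddCommGroup V₂] [Module ℚ V₂] [AddCommGroup V₃] [Module ℚ V₃] :
    Fin 3 → ((V₁ × V₂ × V₃) →ₗ[ℚ] (V₁ × V₂ × V₃)) :=
  ![(LinearMap.inl ℚ V₁ (V₂ × V₃)).comp (LinearMap.fst ℚ V₁ (V₂ × V₃)),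
    ((LinearMap.inr ℚ V₁ (V₂ × V₃)).comp ((LinearMap.inl ℚ V₂ V₃).comp
      ((LinearMap.fst ℚ V₂ V₃).comp (LinearMap.snd ℚ V₁ (V₂ × V₃))))),
    ((LinearMap.inr ℚ V₁ (V₂ × V₃)).comp ((LinearMap.inr ℚ V₂ V₃).comp
      ((LinearMap.snd ℚ V₂ V₃).comp (LinearMap.snd ℚ V₁ (V₂ × V₃)))))]

/-- projection of H^{⊗n} onto the summand V_{j 0} ⊗ ⋯ ⊗ V_{j (n-1)} of the decomposition
induced by H = V₁ ⊕ V₂ ⊕ V₃ (index 0 ↦ V₁, 1 ↦ V₂, 2 ↦ V₃). -/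
noncomputable def compProj (V₁ V₂ V₃ : Type) [AddCommGroup V₁] [Module ℚ V₁]
    [AddCommGroup V₂] [Module ℚ V₂] [AddCommGroup V₃] [Module ℚ V₃]
    (n : ℕ) (j : Fin n → Fin 3) :
    (⨂[ℚ] _i : Fin n, (V₁ × V₂ × V₃)) →ₗ[ℚ] (⨂[ℚ] _i : Fin n, (V₁ × V₂ × V₃)) :=
  PiTensorProduct.map fun i => factorProj V₁ V₂ V₃ (j i)

namespace Stmt2Aux

open scoped TensorProduct
open PiTensorProduct

variable {n : ℕ} {A : Type} [AddCommGroup A] [Module ℚ A]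

theorem map_map (g f : Fin n → (A →ₗ[ℚ] A)) (x : ⨂[ℚ] _i : Fin n, A) :
    PiTensorProduct.map g (PiTensorProduct.map f x)
      = PiTensorProduct.map (fun i => (g i).comp (f i)) x := by
  have := PiTensorProduct.map_comp (f := f) (g := g)
  exact (LinearMap.congr_fun this x).symm

theorem map_zero_coord (f : Fin n → (A →ₗ[ℚ] A)) (i : Fin n) (h : f i = 0)
    (x : ⨂[ℚ] _i : Fin n, A) : PiTensorProduct.map f x = 0 := by
  have h0 : PiTensorProduct.map f = (0 : (⨂[ℚ] _i : Fin n, A) →ₗ[ℚ] ⨂[ℚ] _i : Fin n, A) := by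
    have := (PiTensorProduct.mapMultilinear ℚ (fun _ : Fin n => A)
      (fun _ : Fin n => A)).map_coord_zero (m := f) i h
    simpa using this
  rw [h0]; rfl

theorem map_add_univ' (f g : Fin n → (A →ₗ[ℚ] A)) (x : ⨂[ℚ] _i : Fin n, A) :
    PiTensorProduct.map (fun i => f i + g i) x
      = ∑ s : Finset (Fin n), PiTensorProduct.map (s.piecewise f g) x := by
  classical
  have h := (PiTensorProduct.mapMultilinear ℚ (fun _ : Fin n => A)
    (fun _ : Fin n => A)).map_add_univ f g
  simp only [PiTensorProduct.mapMultilinear_apply] at h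
  have h2 : PiTensorProduct.map (fun i => f i + g i)
      = ∑ s : Finset (Fin n), PiTensorProduct.map (s.piecewise f g) := h
  rw [h2, LinearMap.sum_apply]

theorem map_update_sum' {α : Type} (t : Finset α) (i : Fin n) (g : α → (A →ₗ[ℚ] A))
    (m : Fin n → (A →ₗ[ℚ] A)) (x : ⨂[ℚ] _i : Fin n, A) :
    PiTensorProduct.map (Function.update m i (∑ a ∈ t, g a)) x
      = ∑ a ∈ t, PiTensorProduct.map (Function.update m i (g a)) x := by
  classical
  have h := (PiTensorProduct.mapMultilinear ℚ (fun _ : Fin n => A)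
    (fun _ : Fin n => A)).map_update_sum t i g m
  simp only [PiTensorProduct.mapMultilinear_apply] at h
  rw [h, LinearMap.sum_apply]

theorem calg (V₂ V₃ : Type) [AddCommGroup V₂] [Module ℚ V₂] [AddCommGroup V₃] [Module ℚ V₃]
    [FiniteDimensional ℚ V₂] [FiniteDimensional ℚ V₃]
    (F : Set (V₂ →ₗ[ℚ] V₃))
    (hF : ∀ u : V₂, u ≠ 0 → ∃ f ∈ F, f u ≠ 0) :
    ∃ (m : ℕ) (f : Fin m → (V₂ →ₗ[ℚ] V₃)) (g : Fin m → (V₃ →ₗ[ℚ] V₂)),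
      (∀ k, f k ∈ F) ∧ (∑ k, (g k).comp (f k)) = LinearMap.id := by
  classical
  obtain ⟨b, hbF, hbspan, hbind⟩ := exists_linearIndependent ℚ F
  have hbfin : b.Finite := hbind.setFinite
  letI : Fintype b := hbfin.fintype
  set m := Fintype.card b with hm
  let e : Fin m ≃ b := (Fintype.equivFin b).symm
  set Φ : V₂ →ₗ[ℚ] (Fin m → V₃) := LinearMap.pi (fun k => ((e k : V₂ →ₗ[ℚ] V₃))) with hΦdef
  have hker : LinearMap.ker Φ = ⊥ := by
    rw [LinearMap.ker_eq_bot']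
    intro u hu
    by_contra hne
    obtain ⟨f0, hf0F, hf0⟩ := hF u hne
    have hb0 : ∀ h ∈ b, h u = 0 := by
      intro h hh
      have h1 := congrFun hu (e.symm ⟨h, hh⟩)
      simpa [hΦdef, LinearMap.pi_apply] using h1
    have hfspan : f0 ∈ Submodule.span ℚ b := by
      rw [hbspan]; exact Submodule.subset_span hf0F
    refine hf0 ?_
    refine Submodule.span_induction (p := fun f _ => f u = 0) ?_ ?_ ?_ ?_ hfspan
    · exact fun x hx => hb0 x hx
    · rfl
    · intro x y _ _ hx hy; simp [LinearMap.add_apply, hx, hy]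
    · intro a x _ hx; simp [hx]
  obtain ⟨r, hr⟩ := Φ.exists_leftInverse_of_injective hker
  refine ⟨m, fun k => (e k : V₂ →ₗ[ℚ] V₃),
    fun k => r.comp (LinearMap.single ℚ (fun _ : Fin m => V₃) k),
    fun k => hbF (e k).2, ?_⟩
  apply LinearMap.ext; intro u
  have hru : r (Φ u) = u := LinearMap.congr_fun hr u
  calc (∑ k, (r.comp (LinearMap.single ℚ (fun _ : Fin m => V₃) k)).comp
        ((e k : V₂ →ₗ[ℚ] V₃))) u
      = ∑ k, r (Pi.single k ((e k : V₂ →ₗ[ℚ] V₃) u)) := by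
        rw [LinearMap.sum_apply]; rfl
    _ = r (∑ k, Pi.single k ((e k : V₂ →ₗ[ℚ] V₃) u)) := (map_sum r _ _).symm
    _ = r (Φ u) := by rw [Finset.univ_sum_single (f := fun k => (e k : V₂ →ₗ[ℚ] V₃) u)]; rfl
    _ = u := hru

end Stmt2Aux

namespace Stmt2Aux

variable (V₁ V₂ V₃ : Type) [AddCommGroup V₁] [Module ℚ V₁]
    [AddCommGroup V₂] [Module ℚ V₂] [AddCommGroup V₃] [Module ℚ V₃]

/-- the endomorphism (v₁,v₂,v₃) ↦ (0,0,f v₂). -/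
noncomputable def nMap (f : V₂ →ₗ[ℚ] V₃) : (V₁ × V₂ × V₃) →ₗ[ℚ] (V₁ × V₂ × V₃) :=
  (LinearMap.inr ℚ V₁ (V₂ × V₃)).comp ((LinearMap.inr ℚ V₂ V₃).comp
    (f.comp ((LinearMap.fst ℚ V₂ V₃).comp (LinearMap.snd ℚ V₁ (V₂ × V₃)))))

/-- the endomorphism (v₁,v₂,v₃) ↦ (0, r v₃, 0). -/
noncomputable def gMap (r : V₃ →ₗ[ℚ] V₂) : (V₁ × V₂ × V₃) →ₗ[ℚ] (V₁ × V₂ × V₃) :=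
  (LinearMap.inr ℚ V₁ (V₂ × V₃)).comp ((LinearMap.inl ℚ V₂ V₃).comp
    (r.comp ((LinearMap.snd ℚ V₂ V₃).comp (LinearMap.snd ℚ V₁ (V₂ × V₃)))))

@[simp] theorem nMap_apply (f : V₂ →ₗ[ℚ] V₃) (a : V₁) (b : V₂) (c : V₃) :
    nMap V₁ V₂ V₃ f (a, b, c) = (0, 0, f b) := rfl

@[simp] theorem gMap_apply (r : V₃ →ₗ[ℚ] V₂) (a : V₁) (b : V₂) (c : V₃) :
    gMap V₁ V₂ V₃ r (a, b, c) = (0, r c, 0) := rfl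

/-- h : V₂ → V₂ gives (v₁,v₂,v₃) ↦ (0, h v₂, 0), as an additive hom in h. -/
noncomputable def mMapHom : (V₂ →ₗ[ℚ] V₂) →+ ((V₁ × V₂ × V₃) →ₗ[ℚ] (V₁ × V₂ × V₃)) where
  toFun h := (LinearMap.inr ℚ V₁ (V₂ × V₃)).comp ((LinearMap.inl ℚ V₂ V₃).comp
    (h.comp ((LinearMap.fst ℚ V₂ V₃).comp (LinearMap.snd ℚ V₁ (V₂ × V₃)))))
  map_zero' := by apply LinearMap.ext; rintro ⟨a, b, c⟩; simp
  map_add' h₁ h₂ := by apply LinearMap.ext; rintro ⟨a, b, c⟩; simp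

@[simp] theorem mMapHom_apply (h : V₂ →ₗ[ℚ] V₂) (a : V₁) (b : V₂) (c : V₃) :
    mMapHom V₁ V₂ V₃ h (a, b, c) = (0, h b, 0) := rfl

end Stmt2Aux

namespace Stmt2Aux

variable (V₁ V₂ V₃ : Type) [AddCommGroup V₁] [Module ℚ V₁]
    [AddCommGroup V₂] [Module ℚ V₂] [AddCommGroup V₃] [Module ℚ V₃]

local notation "p1" => factorProj V₁ V₂ V₃ 0
local notation "p2" => factorProj V₁ V₂ V₃ 1
local notation "p3" => factorProj V₁ V₂ V₃ 2
local notation "P" => factorProj V₁ V₂ V₃ 0 + factorProj V₁ V₂ V₃ 1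

@[simp] theorem p1_apply (a : V₁) (b : V₂) (c : V₃) : p1 (a, b, c) = (a, 0, 0) := by
  simp [factorProj]; rfl
@[simp] theorem p2_apply (a : V₁) (b : V₂) (c : V₃) : p2 (a, b, c) = (0, b, 0) := by
  simp [factorProj]
@[simp] theorem p3_apply (a : V₁) (b : V₂) (c : V₃) : p3 (a, b, c) = (0, 0, c) := by
  simp [factorProj]

theorem p3_comp_P : (p3).comp P = 0 := by
  apply LinearMap.ext; rintro ⟨a, b, c⟩; simp

theorem P_comp_nMap (f : V₂ →ₗ[ℚ] V₃) : (P).comp (nMap V₁ V₂ V₃ f) = 0 := by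
  apply LinearMap.ext; rintro ⟨a, b, c⟩; simp

theorem p3_comp_nMap (f : V₂ →ₗ[ℚ] V₃) : (p3).comp (nMap V₁ V₂ V₃ f) = nMap V₁ V₂ V₃ f := by
  apply LinearMap.ext; rintro ⟨a, b, c⟩; simp

theorem p2_comp_P : (p2).comp P = p2 := by
  apply LinearMap.ext; rintro ⟨a, b, c⟩; simp

theorem p1_comp_P : (p1).comp P = p1 := by
  apply LinearMap.ext; rintro ⟨a, b, c⟩; simp

theorem p2_comp_p2 : (p2).comp p2 = p2 := by
  apply LinearMap.ext; rintro ⟨a, b, c⟩; simp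

theorem gMap_comp_nMap (r : V₃ →ₗ[ℚ] V₂) (f : V₂ →ₗ[ℚ] V₃) :
    (gMap V₁ V₂ V₃ r).comp (nMap V₁ V₂ V₃ f) = mMapHom V₁ V₂ V₃ (r.comp f) := by
  apply LinearMap.ext; rintro ⟨a, b, c⟩; simp

theorem mMapHom_id : mMapHom V₁ V₂ V₃ LinearMap.id = p2 := by
  apply LinearMap.ext; rintro ⟨a, b, c⟩; simp

end Stmt2Aux

/-- if every g ∈ G acts on H = V₁ ⊕ V₂ ⊕ V₃ in the block form
[[I,0,0],[0,I,0],[0,f_g,S_g]], for every nonzero u ∈ V₂ some g ∈ G has f_g u ≠ 0 and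
S_g = I, and τ ∈ H^{⊗n} is a G-invariant tensor lying in the span of the summands
V_{j₁} ⊗ ⋯ ⊗ V_{jₙ} with all jᵢ ∈ {1,2}, then τ ∈ V₁^{⊗n}.  (Lying in the span of the
summands with all jᵢ ∈ {1,2} is expressed by saying that the projection of H^{⊗n}
killing V₃ in each factor fixes τ; membership in V₁^{⊗n} by saying that the projection
killing V₂ and V₃ in each factor fixes τ.) -/
theorem stmt2 (V₁ V₂ V₃ : Type) [AddCommGroup V₁] [Module ℚ V₁] [AddCommGroup V₂]
    [Module ℚ V₂] [AddCommGroup V₃] [Module ℚ V₃] [FiniteDimensional ℚ V₁]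
    [FiniteDimensional ℚ V₂] [FiniteDimensional ℚ V₃]
    (G : Type) [Group G] (ρ : G →* ((V₁ × V₂ × V₃) ≃ₗ[ℚ] (V₁ × V₂ × V₃)))
    (hblock : ∀ g : G, ∃ (f : V₂ →ₗ[ℚ] V₃) (S : V₃ ≃ₗ[ℚ] V₃),
      ∀ v₁ v₂ v₃, ρ g (v₁, v₂, v₃) = (v₁, v₂, f v₂ + S v₃))
    (hnondeg : ∀ u : V₂, u ≠ 0 → ∃ (g : G) (f : V₂ →ₗ[ℚ] V₃),
      (∀ v₁ v₂ v₃, ρ g (v₁, v₂, v₃) = (v₁, v₂, f v₂ + v₃)) ∧ f u ≠ 0)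
    (n : ℕ) (τ : ⨂[ℚ] _i : Fin n, (V₁ × V₂ × V₃))
    (hinv : ∀ g : G,
      (PiTensorProduct.map fun _ : Fin n =>
        ((ρ g : (V₁ × V₂ × V₃) ≃ₗ[ℚ] (V₁ × V₂ × V₃)) :
          (V₁ × V₂ × V₃) →ₗ[ℚ] (V₁ × V₂ × V₃))) τ = τ)
    (hspan : (PiTensorProduct.map fun _ : Fin n =>
        (factorProj V₁ V₂ V₃ 0 + factorProj V₁ V₂ V₃ 1)) τ = τ) :
    (PiTensorProduct.map fun _ : Fin n => factorProj V₁ V₂ V₃ 0) τ = τ := by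
  classical
  -- Step 1: for every i0 and every f coming from a group element with S = I,
  -- the tensor with N_f at slot i0 and P = p1 + p2 elsewhere kills τ.
  have step1 : ∀ (i0 : Fin n) (f : V₂ →ₗ[ℚ] V₃) (g : G),
      (∀ v₁ v₂ v₃, ρ g (v₁, v₂, v₃) = (v₁, v₂, f v₂ + v₃)) →
      PiTensorProduct.map (Function.update
        (fun _ : Fin n => factorProj V₁ V₂ V₃ 0 + factorProj V₁ V₂ V₃ 1) i0
        (Stmt2Aux.nMap V₁ V₂ V₃ f)) τ = 0 := by
    intro i0 f g hgf
    have hpg : ((ρ g : (V₁ × V₂ × V₃) ≃ₗ[ℚ] (V₁ × V₂ × V₃)) :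
        (V₁ × V₂ × V₃) →ₗ[ℚ] (V₁ × V₂ × V₃)) = LinearMap.id + Stmt2Aux.nMap V₁ V₂ V₃ f := by
      apply LinearMap.ext; rintro ⟨a, b, c⟩
      simp only [LinearEquiv.coe_coe, LinearMap.add_apply, LinearMap.id_apply,
        Stmt2Aux.nMap_apply]
      rw [hgf a b c]
      simp [Prod.ext_iff, add_comm]
    have hτ := hinv g
    rw [hpg] at hτ
    set c : Fin n → ((V₁ × V₂ × V₃) →ₗ[ℚ] (V₁ × V₂ × V₃)) :=
      Function.update (fun _ : Fin n => factorProj V₁ V₂ V₃ 0 + factorProj V₁ V₂ V₃ 1) i0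
        (factorProj V₁ V₂ V₃ 2) with hc
    have hcτ : PiTensorProduct.map c τ = 0 := by
      conv_lhs => rw [← hspan]
      rw [Stmt2Aux.map_map]
      refine Stmt2Aux.map_zero_coord _ i0 ?_ τ
      rw [hc]
      simp only [Function.update_self]
      exact Stmt2Aux.p3_comp_P V₁ V₂ V₃
    have h2 : PiTensorProduct.map c
        (PiTensorProduct.map (fun _ : Fin n => LinearMap.id + Stmt2Aux.nMap V₁ V₂ V₃ f) τ)
        = 0 := by rw [hτ]; exact hcτ
    rw [Stmt2Aux.map_map] at h2
    have h3 : (fun i => (c i).comp (LinearMap.id + Stmt2Aux.nMap V₁ V₂ V₃ f))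
        = fun i => (fun j => (c j).comp (Stmt2Aux.nMap V₁ V₂ V₃ f)) i + c i := by
      funext i
      rw [LinearMap.comp_add, LinearMap.comp_id, add_comm]
    rw [h3, Stmt2Aux.map_add_univ'] at h2
    rw [Finset.sum_eq_single ({i0} : Finset (Fin n))] at h2
    · have heq : Function.update
          (fun _ : Fin n => factorProj V₁ V₂ V₃ 0 + factorProj V₁ V₂ V₃ 1) i0
          (Stmt2Aux.nMap V₁ V₂ V₃ f)
          = ({i0} : Finset (Fin n)).piecewise
              (fun j => (c j).comp (Stmt2Aux.nMap V₁ V₂ V₃ f)) c := by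
        funext i
        by_cases hi : i = i0
        · subst hi
          rw [Function.update_self,
            Finset.piecewise_eq_of_mem _ _ _ (Finset.mem_singleton_self i)]
          rw [hc]
          simp only [Function.update_self]
          exact (Stmt2Aux.p3_comp_nMap V₁ V₂ V₃ f).symm
        · rw [Function.update_of_ne hi,
            Finset.piecewise_eq_of_notMem _ _ _ (by simpa using hi), hc,
            Function.update_of_ne hi]
      rw [heq]; exact h2
    · intro s _ hs
      by_cases hsub : s ⊆ {i0}
      · rcases Finset.subset_singleton_iff.mp hsub with rfl | rfl
        · rw [Finset.piecewise_empty]; exact hcτ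
        · exact absurd rfl hs
      · obtain ⟨i1, hi1s, hi1⟩ := Finset.not_subset.mp hsub
        have hne : i1 ≠ i0 := by simpa using hi1
        refine Stmt2Aux.map_zero_coord _ i1 ?_ τ
        rw [Finset.piecewise_eq_of_mem _ _ _ hi1s, hc, Function.update_of_ne hne]
        exact Stmt2Aux.P_comp_nMap V₁ V₂ V₃ f
    · intro h; exact absurd (Finset.mem_univ _) h
  -- the nondegenerate family
  have hF : ∀ u : V₂, u ≠ 0 → ∃ f ∈ {f : V₂ →ₗ[ℚ] V₃ |
      ∃ g : G, ∀ v₁ v₂ v₃, ρ g (v₁, v₂, v₃) = (v₁, v₂, f v₂ + v₃)}, f u ≠ 0 := by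
    intro u hu
    obtain ⟨g, f, hg, hfu⟩ := hnondeg u hu
    exact ⟨f, ⟨g, hg⟩, hfu⟩
  obtain ⟨m, ff, gg, hffF, hsum⟩ := Stmt2Aux.calg V₂ V₃ _ hF
  have hp2sum : (∑ k, (Stmt2Aux.gMap V₁ V₂ V₃ (gg k)).comp (Stmt2Aux.nMap V₁ V₂ V₃ (ff k)))
      = factorProj V₁ V₂ V₃ 1 := by
    rw [Finset.sum_congr rfl (fun k _ => Stmt2Aux.gMap_comp_nMap V₁ V₂ V₃ (gg k) (ff k)),
      ← map_sum (Stmt2Aux.mMapHom V₁ V₂ V₃) _ _, hsum, Stmt2Aux.mMapHom_id]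
  -- Step 2: the tensor with p2 at slot i0 and P elsewhere kills τ.
  have step2 : ∀ i0 : Fin n, PiTensorProduct.map (Function.update
      (fun _ : Fin n => factorProj V₁ V₂ V₃ 0 + factorProj V₁ V₂ V₃ 1) i0
      (factorProj V₁ V₂ V₃ 1)) τ = 0 := by
    intro i0
    have hupdeq : Function.update
        (fun _ : Fin n => factorProj V₁ V₂ V₃ 0 + factorProj V₁ V₂ V₃ 1) i0
        (factorProj V₁ V₂ V₃ 1)
        = Function.update
        (fun _ : Fin n => factorProj V₁ V₂ V₃ 0 + factorProj V₁ V₂ V₃ 1) i0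
        (∑ k, (Stmt2Aux.gMap V₁ V₂ V₃ (gg k)).comp (Stmt2Aux.nMap V₁ V₂ V₃ (ff k))) := by
      rw [hp2sum]
    rw [hupdeq, Stmt2Aux.map_update_sum']
    apply Finset.sum_eq_zero
    intro k _
    obtain ⟨g, hg⟩ := hffF k
    have h0 := step1 i0 (ff k) g hg
    have heq : Function.update
        (fun _ : Fin n => factorProj V₁ V₂ V₃ 0 + factorProj V₁ V₂ V₃ 1) i0
        ((Stmt2Aux.gMap V₁ V₂ V₃ (gg k)).comp (Stmt2Aux.nMap V₁ V₂ V₃ (ff k)))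
        = fun i => ((Function.update
            (fun _ : Fin n => (LinearMap.id : (V₁ × V₂ × V₃) →ₗ[ℚ] (V₁ × V₂ × V₃))) i0
            (Stmt2Aux.gMap V₁ V₂ V₃ (gg k))) i).comp
          ((Function.update
            (fun _ : Fin n => factorProj V₁ V₂ V₃ 0 + factorProj V₁ V₂ V₃ 1) i0
            (Stmt2Aux.nMap V₁ V₂ V₃ (ff k))) i) := by
      funext i
      by_cases hi : i = i0
      · subst hi; simp only [Function.update_self]
      · simp only [Function.update_of_ne hi, LinearMap.id_comp]
    rw [heq, ← Stmt2Aux.map_map, h0, map_zero]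
  -- Step 3: expand τ = map(P,…,P) τ and kill all mixed terms.
  have hPadd : (fun _ : Fin n => factorProj V₁ V₂ V₃ 0 + factorProj V₁ V₂ V₃ 1)
      = fun i => (fun _ : Fin n => factorProj V₁ V₂ V₃ 1) i
          + (fun _ : Fin n => factorProj V₁ V₂ V₃ 0) i := by
    funext i; exact add_comm _ _
  have hexp3 : τ = ∑ s : Finset (Fin n), PiTensorProduct.map
      (s.piecewise (fun _ : Fin n => factorProj V₁ V₂ V₃ 1)
        (fun _ : Fin n => factorProj V₁ V₂ V₃ 0)) τ := by
    conv_lhs => rw [← hspan]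
    rw [hPadd, Stmt2Aux.map_add_univ']
  rw [Finset.sum_eq_single (∅ : Finset (Fin n))] at hexp3
  · rw [Finset.piecewise_empty] at hexp3
    exact hexp3.symm
  · intro s _ hs
    obtain ⟨i0, hi0⟩ := Finset.nonempty_of_ne_empty hs
    have heq : s.piecewise (fun _ : Fin n => factorProj V₁ V₂ V₃ 1)
          (fun _ : Fin n => factorProj V₁ V₂ V₃ 0)
        = fun i => ((s.piecewise (fun _ : Fin n => factorProj V₁ V₂ V₃ 1)
            (fun _ : Fin n => factorProj V₁ V₂ V₃ 0)) i).comp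
          ((Function.update
            (fun _ : Fin n => factorProj V₁ V₂ V₃ 0 + factorProj V₁ V₂ V₃ 1) i0
            (factorProj V₁ V₂ V₃ 1)) i) := by
      funext i
      by_cases hi : i = i0
      · subst hi
        rw [Function.update_self, Finset.piecewise_eq_of_mem _ _ _ hi0]
        exact (Stmt2Aux.p2_comp_p2 V₁ V₂ V₃).symm
      · rw [Function.update_of_ne hi]
        by_cases hmem : i ∈ s
        · rw [Finset.piecewise_eq_of_mem _ _ _ hmem]
          exact (Stmt2Aux.p2_comp_P V₁ V₂ V₃).symm
        · rw [Finset.piecewise_eq_of_notMem _ _ _ hmem]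
          exact (Stmt2Aux.p1_comp_P V₁ V₂ V₃).symm
    rw [heq, ← Stmt2Aux.map_map, step2 i0, map_zero]
  · intro h; exact absurd (Finset.mem_univ _) h
end
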